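/- arXiv:2410.01871 — 4 statements merged into one kernel-verified Lean document; each statement's English description precedes it below -/
import Mathlib

section
/- Let X be uniform on [p,1] with p ∈ (0,1) and Y be uniform on [0,1/2], independent, Z = XY. Then the CDF of Z is F(z) = 2z·ln(p)/(p−1) for 0 ≤ z ≤ p/2, and F(z) = (2z(ln(2z) − 1) + p)/(p−1) for p/2 ≤ z ≤ 1/2; in particular F(1/2) = 1. -/
open Set MeasureTheory

/-- CDF of the product `Z = X·Y` of independent `X ~ Uniform[p,1]` and
`Y ~ Uniform[0,1/2]`: `F(z) = 2z·log p/(p−1)` for `0 ≤ z ≤ p/2`,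
`F(z) = (2z(log(2z) − 1) + p)/(p−1)` for `p/2 ≤ z ≤ 1/2`, and `F(1/2) = 1`. -/
theorem stmt_6 (p : ℝ) (hp : p ∈ Ioo (0:ℝ) 1)
    (μ ν : Measure ℝ)
    (hμ : μ = ENNReal.ofReal (1/(1-p)) • volume.restrict (Icc p 1))
    (hν : ν = ENNReal.ofReal 2 • volume.restrict (Icc 0 (1/2)))
    (π : Measure ℝ)
    (hπ : π = Measure.map (fun q : ℝ × ℝ => q.1 * q.2) (μ.prod ν)) :
    (∀ z ∈ Icc (0:ℝ) (p/2), π (Iic z) = ENNReal.ofReal (2*z*Real.log p/(p-1))) ∧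
    (∀ z ∈ Icc (p/2) (1/2:ℝ),
      π (Iic z) = ENNReal.ofReal ((2*z*(Real.log (2*z) - 1) + p)/(p-1))) ∧
    π (Iic (1/2)) = 1 := by
  obtain ⟨hp0, hp1⟩ := hp
  subst hμ hν hπ
  have h1p : (0:ℝ) < 1 - p := by linarith
  have hcontOn : ∀ z : ℝ, ContinuousOn (fun x : ℝ => 2 * min (z/x) (1/2)) (Ici p) := by
    intro z
    have hdiv : ContinuousOn (fun x : ℝ => z/x) (Ici p) :=
      continuousOn_const.div continuousOn_id
        (fun x hx => ne_of_gt (lt_of_lt_of_le hp0 hx))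
    exact continuousOn_const.mul (hdiv.inf continuousOn_const)
  have hcont : ∀ z a b, p ≤ a → p ≤ b →
      IntervalIntegrable (fun x : ℝ => 2 * min (z/x) (1/2)) volume a b := by
    intro z a b ha hb
    apply ContinuousOn.intervalIntegrable
    exact (hcontOn z).mono (fun x hx => le_trans (le_inf ha hb) hx.1)
  -- key formula
  have key : ∀ z : ℝ, 0 ≤ z →
      (Measure.map (fun q : ℝ × ℝ => q.1 * q.2)
        ((ENNReal.ofReal (1/(1-p)) • volume.restrict (Icc p 1)).prod
          (ENNReal.ofReal 2 • volume.restrict (Icc 0 (1/2))))) (Iic z)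
      = ENNReal.ofReal ((1/(1-p)) * ∫ x in p..1, 2 * min (z/x) (1/2)) := by
    intro z hz
    rw [Measure.map_apply (by fun_prop) measurableSet_Iic]
    rw [Measure.prod_apply (by exact measurable_fst.mul measurable_snd measurableSet_Iic)]
    have hfib : ∀ x ∈ Icc p 1,
        (ENNReal.ofReal 2 • volume.restrict (Icc 0 (1/2)))
          (Prod.mk x ⁻¹' ((fun q : ℝ × ℝ => q.1 * q.2) ⁻¹' Iic z))
        = ENNReal.ofReal (2 * min (z/x) (1/2)) := by
      intro x hx
      have hx0 : 0 < x := lt_of_lt_of_le hp0 hx.1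
      have hset : (Prod.mk x ⁻¹' ((fun q : ℝ × ℝ => q.1 * q.2) ⁻¹' Iic z)) = Iic (z/x) := by
        ext y
        simp [le_div_iff₀ hx0, mul_comm]
      rw [hset, Measure.smul_apply, Measure.restrict_apply measurableSet_Iic]
      have hset2 : Iic (z/x) ∩ Icc 0 (1/2 : ℝ) = Icc 0 (min (z/x) (1/2)) := by
        ext y
        simp only [mem_inter_iff, mem_Iic, mem_Icc, le_min_iff]
        tauto
      rw [hset2, Real.volume_Icc, smul_eq_mul, ← ENNReal.ofReal_mul (by norm_num)]
      congr 1
      ring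
    rw [lintegral_smul_measure, setLIntegral_congr_fun measurableSet_Icc
      hfib]
    rw [← ofReal_integral_eq_lintegral_ofReal]
    · rw [smul_eq_mul, ← ENNReal.ofReal_mul (by positivity)]
      congr 1
      rw [MeasureTheory.integral_Icc_eq_integral_Ioc,
        ← intervalIntegral.integral_of_le hp1.le]
    · exact ((hcontOn z).mono Icc_subset_Ici_self).integrableOn_compact isCompact_Icc
    · filter_upwards [ae_restrict_mem measurableSet_Icc] with x hx
      have hx0 : 0 < x := lt_of_lt_of_le hp0 hx.1
      have h0 : 0 ≤ min (z/x) (1/2:ℝ) := le_min (div_nonneg hz hx0.le) (by norm_num)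
      show (0:ℝ) ≤ 2 * min (z/x) (1/2)
      linarith
  have hlogp : Real.log p < 0 := Real.log_neg hp0 hp1
  -- part 2
  have part2 : ∀ z ∈ Icc (p/2) (1/2:ℝ),
      (Measure.map (fun q : ℝ × ℝ => q.1 * q.2)
        ((ENNReal.ofReal (1/(1-p)) • volume.restrict (Icc p 1)).prod
          (ENNReal.ofReal 2 • volume.restrict (Icc 0 (1/2))))) (Iic z)
      = ENNReal.ofReal ((2*z*(Real.log (2*z) - 1) + p)/(p-1)) := by
    intro z hz
    have hz0 : 0 < z := by have := hz.1; linarith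
    have h2zp : p ≤ 2*z := by have := hz.1; linarith
    have h2z1 : 2*z ≤ 1 := by have := hz.2; linarith
    rw [key z hz0.le]
    have hsplit := intervalIntegral.integral_add_adjacent_intervals
      (hcont z p (2*z) le_rfl h2zp) (hcont z (2*z) 1 h2zp (by linarith))
    have hI1 : (∫ x in p..(2*z), 2 * min (z/x) (1/2)) = 2*z - p := by
      rw [intervalIntegral.integral_congr (g := fun _ => (1:ℝ)) ?_]
      · simp
      · intro x hx
        rw [uIcc_of_le h2zp] at hx
        have hx0 : 0 < x := lt_of_lt_of_le hp0 hx.1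
        have : (1/2:ℝ) ≤ z/x := by
          rw [le_div_iff₀ hx0]; linarith [hx.2]
        show 2 * min (z/x) (1/2) = 1
        rw [min_eq_right this]; norm_num
    have hI2 : (∫ x in (2*z)..1, 2 * min (z/x) (1/2)) = -(2*z*Real.log (2*z)) := by
      rw [intervalIntegral.integral_congr (g := fun x => (2*z) * (1/x)) ?_]
      · rw [intervalIntegral.integral_const_mul, integral_one_div ?_]
        · rw [one_div, Real.log_inv]; ring
        · rw [uIcc_of_le h2z1]
          intro h0
          exact absurd h0.1 (by linarith)
      · intro x hx
        rw [uIcc_of_le h2z1] at hx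
        have hx0 : 0 < x := by linarith [hx.1]
        have : z/x ≤ (1/2:ℝ) := by
          rw [div_le_iff₀ hx0]; linarith [hx.1]
        show 2 * min (z/x) (1/2) = 2*z*(1/x)
        rw [min_eq_left this]
        field_simp
    rw [← hsplit, hI1, hI2]
    congr 1
    have hne : p - 1 ≠ 0 := by linarith
    field_simp
    ring
  refine ⟨?_, part2, ?_⟩
  · intro z hz
    rw [key z hz.1]
    have hI : (∫ x in p..1, 2 * min (z/x) (1/2)) = -(2*z*Real.log p) := by
      rw [intervalIntegral.integral_congr (g := fun x => (2*z) * (1/x)) ?_]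
      · rw [intervalIntegral.integral_const_mul, integral_one_div ?_]
        · rw [one_div, Real.log_inv]; ring
        · rw [uIcc_of_le hp1.le]
          intro h0
          exact absurd h0.1 (by linarith)
      · intro x hx
        rw [uIcc_of_le hp1.le] at hx
        have hx0 : 0 < x := lt_of_lt_of_le hp0 hx.1
        have : z/x ≤ (1/2:ℝ) := by
          rw [div_le_iff₀ hx0]; linarith [hz.2, hx.1]
        show 2 * min (z/x) (1/2) = 2*z*(1/x)
        rw [min_eq_left this]
        field_simp
    rw [hI]
    congr 1
    have hne : p - 1 ≠ 0 := by linarith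
    field_simp
    ring
  · have h := part2 (1/2) ⟨by linarith, le_rfl⟩
    rw [h]
    have : (2*(1/2:ℝ)*(Real.log (2*(1/2)) - 1) + p)/(p-1) = 1 := by
      have h1 : (2:ℝ)*(1/2) = 1 := by norm_num
      rw [h1, Real.log_one]
      have hne : p - 1 ≠ 0 := by linarith
      field_simp
      ring
    rw [this, ENNReal.ofReal_one]
end

section
/- Let p ∈ (0,1). For 0 ≤ v ≤ p/2, the bid b(v) = p + v²·ln(p)/(p−1) satisfies b(v) > p for v > 0, and for p/2 ≤ v ≤ 1/2 the bid b(v) = p + (8v²(ln(2v) − 1/2) + p²)/(8(p−1)) also satisfies b(v) > p. -/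
open Set Real

/-- Corollary 1 (Uniform Nash Bidding Equilibrium): both branches of the
uniform-case optimal SIRA bid strictly exceed the threshold price `p`. -/
theorem stmt_8 (p : ℝ) (hp : p ∈ Ioo (0:ℝ) 1) :
    (∀ v : ℝ, 0 < v → v ≤ p/2 → p < p + v^2 * Real.log p/(p-1)) ∧
    (∀ v : ℝ, p/2 ≤ v → v ≤ 1/2 →
      p < p + (8*v^2*(Real.log (2*v) - 1/2) + p^2)/(8*(p-1))) := by
  obtain ⟨hp0, hp1⟩ := hp
  have hlogp : Real.log p < 0 := Real.log_neg hp0 hp1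
  have hpm1 : p - 1 < 0 := by linarith
  constructor
  · intro v hv _
    have h1 : v^2 * Real.log p < 0 := mul_neg_of_pos_of_neg (by positivity) hlogp
    have := div_pos_of_neg_of_neg h1 hpm1
    linarith
  · intro v hv1 hv2
    have hv0 : 0 < v := by linarith
    have h2v : 2*v ≤ 1 := by linarith
    have hlog : Real.log (2*v) ≤ 0 := Real.log_nonpos (by linarith) h2v
    have hnum : 8*v^2*(Real.log (2*v) - 1/2) + p^2 < 0 := by
      rcases lt_or_eq_of_le h2v with h | h
      · have hlog' : Real.log (2*v) < 0 := Real.log_neg (by linarith) h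
        have : 8*v^2*Real.log (2*v) < 0 := mul_neg_of_pos_of_neg (by positivity) hlog'
        nlinarith [sq_nonneg (2*v - p), sq_nonneg v]
      · have hv : v = 1/2 := by linarith
        have : p^2 < 4*v^2 := by nlinarith
        nlinarith [mul_nonpos_of_nonneg_of_nonpos (by positivity : (0:ℝ) ≤ 8*v^2) hlog]
    have hden : 8*(p-1) < 0 := by linarith
    have := div_pos_of_neg_of_neg hnum hden
    linarith
end

section
/- Let X have density f(x) = 6x(1−x)/(1 − F_β(p)) on [p,1] where F_β(x) = 3x² − 2x³ and p ∈ (0,1), and let Y be uniform on [0,1/2], independent. Then the density of Z = XY is g(z) = 6(p² − 2p + 1)/(1 − F_β(p)) for 0 ≤ z ≤ p/2, and g(z) = 6(4z² − 4z + 1)/(1 − F_β(p)) for p/2 ≤ z ≤ 1/2. -/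
open Set MeasureTheory

lemma aux_lint_Ioc (a b : ℝ) (hab : a ≤ b) (f : ℝ → ℝ)
    (hf : ContinuousOn f (Icc a b)) (h0 : ∀ x ∈ Icc a b, 0 ≤ f x) :
    ∫⁻ x in Ioc a b, ENNReal.ofReal (f x) = ENNReal.ofReal (∫ x in a..b, f x) := by
  rw [intervalIntegral.integral_of_le hab,
    ofReal_integral_eq_lintegral_ofReal
      ((hf.integrableOn_Icc).mono_set Ioc_subset_Icc_self)
      ((ae_restrict_iff' measurableSet_Ioc).2
        (ae_of_all _ fun x hx => h0 x (Ioc_subset_Icc_self hx)))]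

lemma int_beta (a b c : ℝ) :
    ∫ x in a..b, 6*x*(1-x)/c = ((3*b^2-2*b^3) - (3*a^2-2*a^3))/c := by
  have key : ∀ x ∈ uIcc a b, HasDerivAt (fun x : ℝ => (3*x^2-2*x^3)/c)
      (6*x*(1-x)/c) x := by
    intro x _
    have := (((hasDerivAt_pow 2 x).const_mul 3).sub
      ((hasDerivAt_pow 3 x).const_mul 2)).div_const c
    refine this.congr_deriv ?_; simp [id]; ring
  rw [intervalIntegral.integral_eq_sub_of_hasDerivAt key
    ((by fun_prop : Continuous fun x : ℝ => 6*x*(1-x)/c).intervalIntegrable a b)]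
  ring

lemma int_lin (a b t c : ℝ) :
    ∫ x in a..b, 12*(1-x)*t/c = (6*(1-a)^2 - 6*(1-b)^2)*t/c := by
  have key : ∀ x ∈ uIcc a b, HasDerivAt (fun x : ℝ => -(6*(1-x)^2)*t/c)
      (12*(1-x)*t/c) x := by
    intro x _
    have := (((((hasDerivAt_id x).const_sub 1).pow 2).const_mul 6).neg.mul_const t).div_const c
    refine this.congr_deriv ?_; simp [id]; ring
  rw [intervalIntegral.integral_eq_sub_of_hasDerivAt key
    ((by fun_prop : Continuous fun x : ℝ => 12*(1-x)*t/c).intervalIntegrable a b)]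
  ring

lemma int_sq (a b c : ℝ) :
    ∫ z in a..b, 6*(4*z^2-4*z+1)/c = ((2*b-1)^3 - (2*a-1)^3)/c := by
  have key : ∀ x ∈ uIcc a b, HasDerivAt (fun z : ℝ => (2*z-1)^3/c)
      (6*(4*x^2-4*x+1)/c) x := by
    intro x _
    have := ((((hasDerivAt_id x).const_mul 2).sub_const 1).pow 3).div_const c
    refine this.congr_deriv ?_; simp [id]; ring
  rw [intervalIntegral.integral_eq_sub_of_hasDerivAt key
    ((by fun_prop : Continuous fun z : ℝ => 6*(4*z^2-4*z+1)/c).intervalIntegrable a b)]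
  ring

lemma aux_nu (t x : ℝ) (hx : 0 < x) :
    (ENNReal.ofReal 2 • volume.restrict (Icc 0 (1/2))) {y : ℝ | x * y ≤ t} =
      ENNReal.ofReal (2 * max 0 (min (t/x) (1/2))) := by
  have hset : {y : ℝ | x * y ≤ t} = Iic (t/x) := by
    ext y; simp [mem_Iic, le_div_iff₀ hx, mul_comm]
  rw [hset, Measure.smul_apply, Measure.restrict_apply measurableSet_Iic,
    smul_eq_mul]
  have : Iic (t/x) ∩ Icc 0 (1/2) = Icc 0 (min (t/x) (1/2)) := by
    ext y; simp [mem_Iic, mem_Icc, and_comm, and_assoc, le_min_iff]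
    tauto
  rw [this, Real.volume_Icc, ← ENNReal.ofReal_mul (by norm_num)]
  rcases le_total 0 (min (t/x) (1/2)) with h|h
  · rw [max_eq_right h]; ring_nf
  · rw [max_eq_left h, ENNReal.ofReal_eq_zero.2 (by nlinarith),
      ENNReal.ofReal_eq_zero.2 (by nlinarith)]

lemma aux_key (p t : ℝ) (hp0 : 0 < p) (hp1 : p < 1) (c : ℝ) (hc : 0 < c) :
    Measure.map (fun q : ℝ × ℝ => q.1 * q.2)
      ((volume.withDensity (fun x => ENNReal.ofReal
          (Set.indicator (Icc p 1) (fun x => 6*x*(1-x)/c) x))).prod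
        (ENNReal.ofReal 2 • volume.restrict (Icc 0 (1/2)))) (Iic t)
    = ∫⁻ x in Ioc p 1,
        ENNReal.ofReal ((6*x*(1-x)/c) * (2 * max 0 (min (t/x) (1/2)))) := by
  set ν : Measure ℝ := ENNReal.ofReal 2 • volume.restrict (Icc 0 (1/2)) with hν
  have hmul : Measurable fun q : ℝ × ℝ => q.1 * q.2 := measurable_fst.mul measurable_snd
  haveI : IsFiniteMeasure ν := by
    constructor
    rw [hν, Measure.smul_apply, Measure.restrict_apply_univ, smul_eq_mul,
      Real.volume_Icc]
    exact ENNReal.mul_lt_top ENNReal.ofReal_lt_top ENNReal.ofReal_lt_top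
  have hfm : Measurable fun x : ℝ => ENNReal.ofReal
      (Set.indicator (Icc p 1) (fun x => 6*x*(1-x)/c) x) :=
    (((by fun_prop : Measurable fun x : ℝ => 6*x*(1-x)/c)).indicator
      measurableSet_Icc).ennreal_ofReal
  have hφm : Measurable fun x : ℝ => ν (Prod.mk x ⁻¹'
      ((fun q : ℝ × ℝ => q.1 * q.2) ⁻¹' Iic t)) :=
    measurable_measure_prodMk_left (hmul measurableSet_Iic)
  rw [Measure.map_apply hmul measurableSet_Iic,
    Measure.prod_apply (hmul measurableSet_Iic),
    lintegral_withDensity_eq_lintegral_mul _ hfm hφm]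
  have step : ∀ x : ℝ,
      ((fun x => ENNReal.ofReal (Set.indicator (Icc p 1)
          (fun x => 6*x*(1-x)/c) x)) * fun x => ν (Prod.mk x ⁻¹'
            ((fun q : ℝ × ℝ => q.1 * q.2) ⁻¹' Iic t))) x
      = Set.indicator (Icc p 1) (fun x => ENNReal.ofReal (6*x*(1-x)/c) *
          ν {y : ℝ | x * y ≤ t}) x := by
    intro x
    have : Prod.mk x ⁻¹' ((fun q : ℝ × ℝ => q.1 * q.2) ⁻¹' Iic t)
        = {y : ℝ | x * y ≤ t} := rfl
    by_cases hx : x ∈ Icc p 1 <;> simp [hx, this]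
  rw [lintegral_congr step, lintegral_indicator measurableSet_Icc _,
    Measure.restrict_congr_set Ioc_ae_eq_Icc.symm]
  refine setLIntegral_congr_fun measurableSet_Ioc (fun x hx => ?_)
  have hx0 : 0 < x := lt_trans hp0 hx.1
  rw [aux_nu t x hx0, ← ENNReal.ofReal_mul]
  exact div_nonneg (by nlinarith [hx.2]) hc.le

set_option maxHeartbeats 1000000 in
/-- Density of the product `Z = X·Y` of a Beta(2,2) variable truncated to
`[p,1]` (density `6x(1−x)/(1 − F_β(p))` with `F_β(x) = 3x² − 2x³`) and an
independent `Y ~ Uniform[0,1/2]`: the density is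
`6(p² − 2p + 1)/(1 − F_β(p))` on `[0, p/2]` and
`6(4z² − 4z + 1)/(1 − F_β(p))` on `[p/2, 1/2]` (and `0` elsewhere). -/
theorem stmt_10 (p : ℝ) (hp : p ∈ Ioo (0:ℝ) 1) (Fβ : ℝ) (hFβ : Fβ = 3*p^2 - 2*p^3)
    (μ ν : Measure ℝ)
    (hμ : μ = volume.withDensity (fun x => ENNReal.ofReal
      (Set.indicator (Icc p 1) (fun x => 6*x*(1-x)/(1 - Fβ)) x)))
    (hν : ν = ENNReal.ofReal 2 • volume.restrict (Icc 0 (1/2)))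
    (g : ℝ → ℝ)
    (hg : g = Set.indicator (Icc 0 (1/2))
      (fun z => if z ≤ p/2 then 6*(p^2 - 2*p + 1)/(1 - Fβ)
        else 6*(4*z^2 - 4*z + 1)/(1 - Fβ))) :
    Measure.map (fun q : ℝ × ℝ => q.1 * q.2) (μ.prod ν) =
      volume.withDensity (fun z => ENNReal.ofReal (g z)) := by
  obtain ⟨hp0, hp1⟩ := hp
  subst hFβ hμ hν hg
  set c : ℝ := 1 - (3*p^2 - 2*p^3) with hcdef
  have hc : 0 < c := by
    rw [hcdef]
    nlinarith [mul_pos (mul_pos (sub_pos.2 hp1) (sub_pos.2 hp1))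
      (by linarith : (0:ℝ) < 1 + 2*p)]
  clear_value c
  have hcne : c ≠ 0 := hc.ne'
  haveI instν : IsFiniteMeasure
      (ENNReal.ofReal 2 • volume.restrict (Icc (0:ℝ) (1/2))) := by
    constructor
    rw [Measure.smul_apply, Measure.restrict_apply_univ, smul_eq_mul, Real.volume_Icc]
    exact ENNReal.mul_lt_top ENNReal.ofReal_lt_top ENNReal.ofReal_lt_top
  haveI instμ : IsFiniteMeasure (volume.withDensity fun x =>
      ENNReal.ofReal (Set.indicator (Icc p 1) (fun x => 6*x*(1-x)/c) x)) := by
    constructor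
    rw [withDensity_apply _ MeasurableSet.univ, Measure.restrict_univ]
    have e : ∀ z : ℝ, ENNReal.ofReal
        (Set.indicator (Icc p 1) (fun x => 6*x*(1-x)/c) z)
        = Set.indicator (Icc p 1) (fun x => ENNReal.ofReal (6*x*(1-x)/c)) z := by
      intro z; by_cases h : z ∈ Icc p 1 <;> simp [h]
    rw [lintegral_congr e, lintegral_indicator measurableSet_Icc _]
    calc ∫⁻ x in Icc p 1, ENNReal.ofReal (6*x*(1-x)/c)
        ≤ ∫⁻ _x in Icc p 1, ENNReal.ofReal (6/c) :=
          lintegral_mono fun x => ENNReal.ofReal_le_ofReal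
            (div_le_div_of_nonneg_right (by nlinarith [sq_nonneg (2*x-1)]) hc.le)
      _ = ENNReal.ofReal (6/c) * volume (Icc p 1) := setLIntegral_const _ _
      _ < ⊤ := ENNReal.mul_lt_top ENNReal.ofReal_lt_top
          (by rw [Real.volume_Icc]; exact ENNReal.ofReal_lt_top)
  haveI : IsFiniteMeasure (Measure.map (fun q : ℝ × ℝ => q.1 * q.2)
      ((volume.withDensity fun x => ENNReal.ofReal
        (Set.indicator (Icc p 1) (fun x => 6*x*(1-x)/c) x)).prod
      (ENNReal.ofReal 2 • volume.restrict (Icc (0:ℝ) (1/2))))) :=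
    Measure.isFiniteMeasure_map _ _
  refine Measure.ext_of_Iic _ _ fun t => ?_
  rw [aux_key p t hp0 hp1 c hc, withDensity_apply _ measurableSet_Iic]
  have eg : ∀ z : ℝ, ENNReal.ofReal (Set.indicator (Icc (0:ℝ) (1/2))
      (fun z => if z ≤ p/2 then 6*(p^2 - 2*p + 1)/c else 6*(4*z^2 - 4*z + 1)/c) z)
      = Set.indicator (Icc (0:ℝ) (1/2)) (fun z => ENNReal.ofReal
        (if z ≤ p/2 then 6*(p^2 - 2*p + 1)/c else 6*(4*z^2 - 4*z + 1)/c)) z := by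
    intro z; simp only [Set.indicator_apply]; split_ifs <;> simp
  rw [lintegral_congr eg, lintegral_indicator measurableSet_Icc _,
    Measure.restrict_restrict measurableSet_Icc]
  rcases lt_or_ge t 0 with ht | ht0
  · -- t < 0 : both sides vanish
    have hset : Icc (0:ℝ) (1/2) ∩ Iic t = ∅ := by
      ext z; simp only [mem_inter_iff, mem_Icc, mem_Iic, mem_empty_iff_false, iff_false]
      rintro ⟨⟨h1, _⟩, h3⟩; linarith
    rw [hset, Measure.restrict_empty, lintegral_zero_measure]
    have hL : ∀ x ∈ Ioc p 1, ENNReal.ofReal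
        ((6*x*(1-x)/c) * (2 * max 0 (min (t/x) (1/2)))) = (0:ENNReal) := by
      intro x hx
      have hx0 : 0 < x := lt_trans hp0 hx.1
      have hm : min (t/x) (1/2) ≤ 0 :=
        le_trans (min_le_left _ _) (div_neg_of_neg_of_pos ht hx0).le
      rw [max_eq_left hm]; simp
    exact (setLIntegral_congr_fun measurableSet_Ioc hL).trans
      lintegral_zero
  rcases le_or_gt t (p/2) with htp | htp
  · -- 0 ≤ t ≤ p/2
    have hL : ∀ x ∈ Ioc p 1, ENNReal.ofReal
        ((6*x*(1-x)/c) * (2 * max 0 (min (t/x) (1/2))))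
        = ENNReal.ofReal (12*(1-x)*t/c) := by
      intro x hx
      have hx0 : 0 < x := lt_trans hp0 hx.1
      have h1 : t/x ≤ 1/2 := by rw [div_le_iff₀ hx0]; nlinarith [hx.1]
      have h2 : (0:ℝ) ≤ t/x := div_nonneg ht0 hx0.le
      rw [min_eq_left h1, max_eq_right h2]
      refine congrArg ENNReal.ofReal ?_
      calc 6*x*(1-x)/c * (2*(t/x)) = (x * x⁻¹) * (12*(1-x)*t/c) := by ring
        _ = 12*(1-x)*t/c := by rw [mul_inv_cancel₀ hx0.ne', one_mul]
    rw [setLIntegral_congr_fun measurableSet_Ioc hL,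
      aux_lint_Ioc p 1 hp1.le _ (Continuous.continuousOn (by fun_prop))
        (fun x hx => div_nonneg (by nlinarith [hx.2]) hc.le),
      int_lin]
    have hset : Icc (0:ℝ) (1/2) ∩ Iic t = Icc 0 t := by
      ext z; simp only [mem_inter_iff, mem_Icc, mem_Iic]
      constructor
      · rintro ⟨⟨h1, _⟩, h3⟩; exact ⟨h1, h3⟩
      · rintro ⟨h1, h3⟩; exact ⟨⟨h1, by linarith⟩, h3⟩
    have hR : ∀ z ∈ Icc (0:ℝ) t, ENNReal.ofReal
        (if z ≤ p/2 then 6*(p^2 - 2*p + 1)/c else 6*(4*z^2 - 4*z + 1)/c)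
        = ENNReal.ofReal (6*(p^2 - 2*p + 1)/c) := fun z hz => by
      rw [if_pos (le_trans hz.2 htp)]
    rw [hset, setLIntegral_congr_fun measurableSet_Icc hR,
      setLIntegral_const, Real.volume_Icc,
      ← ENNReal.ofReal_mul (div_nonneg (by nlinarith [sq_nonneg (p-1)]) hc.le)]
    exact congrArg ENNReal.ofReal (by ring)
  rcases le_or_gt t (1/2) with ht2 | ht2
  · -- p/2 < t ≤ 1/2
    have hp2t : p ≤ 2*t := by linarith
    have h2t1 : 2*t ≤ 1 := by linarith
    have hL1 : ∀ x ∈ Ioc p (2*t), ENNReal.ofReal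
        ((6*x*(1-x)/c) * (2 * max 0 (min (t/x) (1/2))))
        = ENNReal.ofReal (6*x*(1-x)/c) := by
      intro x hx
      have hx0 : 0 < x := lt_trans hp0 hx.1
      have h1 : (1:ℝ)/2 ≤ t/x := by rw [le_div_iff₀ hx0]; linarith [hx.2]
      rw [min_eq_right h1, max_eq_right (by norm_num : (0:ℝ) ≤ 1/2)]
      congr 1; ring
    have hL2 : ∀ x ∈ Ioc (2*t) 1, ENNReal.ofReal
        ((6*x*(1-x)/c) * (2 * max 0 (min (t/x) (1/2))))
        = ENNReal.ofReal (12*(1-x)*t/c) := by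
      intro x hx
      have hx0 : 0 < x := by nlinarith [hx.1]
      have h1 : t/x ≤ 1/2 := by rw [div_le_iff₀ hx0]; nlinarith [hx.1]
      have h2 : (0:ℝ) ≤ t/x := div_nonneg (by linarith) hx0.le
      rw [min_eq_left h1, max_eq_right h2]
      refine congrArg ENNReal.ofReal ?_
      calc 6*x*(1-x)/c * (2*(t/x)) = (x * x⁻¹) * (12*(1-x)*t/c) := by ring
        _ = 12*(1-x)*t/c := by rw [mul_inv_cancel₀ hx0.ne', one_mul]
    rw [← Ioc_union_Ioc_eq_Ioc hp2t h2t1,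
      lintegral_union measurableSet_Ioc (Ioc_disjoint_Ioc_of_le le_rfl),
      setLIntegral_congr_fun measurableSet_Ioc hL1,
      setLIntegral_congr_fun measurableSet_Ioc hL2,
      aux_lint_Ioc p (2*t) hp2t _ (Continuous.continuousOn (by fun_prop))
        (fun x hx => div_nonneg (by nlinarith [hx.1, hx.2]) hc.le),
      aux_lint_Ioc (2*t) 1 h2t1 _ (Continuous.continuousOn (by fun_prop))
        (fun x hx => div_nonneg (by nlinarith [hx.2]) hc.le),
      int_beta, int_lin,
      ← ENNReal.ofReal_add
        (div_nonneg (by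
          nlinarith [mul_nonneg (sub_nonneg.2 hp2t)
              (mul_nonneg (by linarith : (0:ℝ) ≤ 2*t) (by linarith : (0:ℝ) ≤ 1-2*t)),
            mul_nonneg (sub_nonneg.2 hp2t)
              (mul_nonneg hp0.le (by linarith : (0:ℝ) ≤ 1-p)),
            mul_nonneg (sub_nonneg.2 hp2t)
              (mul_nonneg (by linarith : (0:ℝ) ≤ 2*t) (by linarith : (0:ℝ) ≤ 1-p)),
            mul_nonneg (sub_nonneg.2 hp2t)
              (mul_nonneg hp0.le (by linarith : (0:ℝ) ≤ 1-2*t))]) hc.le)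
        (div_nonneg (by nlinarith [mul_nonneg (sq_nonneg (1-2*t)) ht0]) hc.le)]
    have hset : Icc (0:ℝ) (1/2) ∩ Iic t = Icc 0 t := by
      ext z; simp only [mem_inter_iff, mem_Icc, mem_Iic]
      constructor
      · rintro ⟨⟨h1, _⟩, h3⟩; exact ⟨h1, h3⟩
      · rintro ⟨h1, h3⟩; exact ⟨⟨h1, by linarith⟩, h3⟩
    have hdisj : Disjoint (Icc (0:ℝ) (p/2)) (Ioc (p/2) t) :=
      Set.disjoint_left.2 fun z hz hz' => absurd hz.2 (not_le.2 hz'.1)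
    have hR1 : ∀ z ∈ Icc (0:ℝ) (p/2), ENNReal.ofReal
        (if z ≤ p/2 then 6*(p^2 - 2*p + 1)/c else 6*(4*z^2 - 4*z + 1)/c)
        = ENNReal.ofReal (6*(p^2 - 2*p + 1)/c) := fun z hz => by
      rw [if_pos hz.2]
    have hR2 : ∀ z ∈ Ioc (p/2) t, ENNReal.ofReal
        (if z ≤ p/2 then 6*(p^2 - 2*p + 1)/c else 6*(4*z^2 - 4*z + 1)/c)
        = ENNReal.ofReal (6*(4*z^2 - 4*z + 1)/c) := fun z hz => by
      rw [if_neg (not_le.2 hz.1)]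
    rw [hset, ← Icc_union_Ioc_eq_Icc (by linarith : (0:ℝ) ≤ p/2) htp.le,
      lintegral_union measurableSet_Ioc hdisj,
      setLIntegral_congr_fun measurableSet_Icc hR1,
      setLIntegral_congr_fun measurableSet_Ioc hR2,
      setLIntegral_const, Real.volume_Icc,
      ← ENNReal.ofReal_mul (div_nonneg (by nlinarith [sq_nonneg (p-1)]) hc.le),
      aux_lint_Ioc (p/2) t htp.le _ (Continuous.continuousOn (by fun_prop))
        (fun z _ => div_nonneg (by nlinarith [sq_nonneg (2*z-1)]) hc.le),
      int_sq,
      ← ENNReal.ofReal_add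
        (mul_nonneg (div_nonneg (by nlinarith [sq_nonneg (p-1)]) hc.le) (by linarith))
        (div_nonneg (by
          nlinarith [mul_nonneg (sub_nonneg.2 hp2t) (sq_nonneg (2*t-1+(p-1))),
            mul_nonneg (sub_nonneg.2 hp2t) (sq_nonneg (2*t-1)),
            mul_nonneg (sub_nonneg.2 hp2t) (sq_nonneg (p-1))]) hc.le)]
    exact congrArg ENNReal.ofReal (by ring)
  · -- 1/2 < t
    have hL1 : ∀ x ∈ Ioc p 1, ENNReal.ofReal
        ((6*x*(1-x)/c) * (2 * max 0 (min (t/x) (1/2))))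
        = ENNReal.ofReal (6*x*(1-x)/c) := by
      intro x hx
      have hx0 : 0 < x := lt_trans hp0 hx.1
      have h1 : (1:ℝ)/2 ≤ t/x := by rw [le_div_iff₀ hx0]; nlinarith [hx.2]
      rw [min_eq_right h1, max_eq_right (by norm_num : (0:ℝ) ≤ 1/2)]
      congr 1; ring
    rw [setLIntegral_congr_fun measurableSet_Ioc hL1,
      aux_lint_Ioc p 1 hp1.le _ (Continuous.continuousOn (by fun_prop))
        (fun x hx => div_nonneg (by nlinarith [hx.1, hx.2]) hc.le),
      int_beta]
    have hset : Icc (0:ℝ) (1/2) ∩ Iic t = Icc 0 (1/2) :=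
      inter_eq_left.2 fun z hz => le_trans hz.2 ht2.le
    have hdisj : Disjoint (Icc (0:ℝ) (p/2)) (Ioc (p/2) (1/2)) :=
      Set.disjoint_left.2 fun z hz hz' => absurd hz.2 (not_le.2 hz'.1)
    have hR1 : ∀ z ∈ Icc (0:ℝ) (p/2), ENNReal.ofReal
        (if z ≤ p/2 then 6*(p^2 - 2*p + 1)/c else 6*(4*z^2 - 4*z + 1)/c)
        = ENNReal.ofReal (6*(p^2 - 2*p + 1)/c) := fun z hz => by
      rw [if_pos hz.2]
    have hR2 : ∀ z ∈ Ioc (p/2) (1/2), ENNReal.ofReal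
        (if z ≤ p/2 then 6*(p^2 - 2*p + 1)/c else 6*(4*z^2 - 4*z + 1)/c)
        = ENNReal.ofReal (6*(4*z^2 - 4*z + 1)/c) := fun z hz => by
      rw [if_neg (not_le.2 hz.1)]
    rw [hset, ← Icc_union_Ioc_eq_Icc (by linarith : (0:ℝ) ≤ p/2)
        (by linarith : p/2 ≤ (1:ℝ)/2),
      lintegral_union measurableSet_Ioc hdisj,
      setLIntegral_congr_fun measurableSet_Icc hR1,
      setLIntegral_congr_fun measurableSet_Ioc hR2,
      setLIntegral_const, Real.volume_Icc,
      ← ENNReal.ofReal_mul (div_nonneg (by nlinarith [sq_nonneg (p-1)]) hc.le),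
      aux_lint_Ioc (p/2) (1/2) (by linarith) _ (Continuous.continuousOn (by fun_prop))
        (fun z _ => div_nonneg (by nlinarith [sq_nonneg (2*z-1)]) hc.le),
      int_sq,
      ← ENNReal.ofReal_add
        (mul_nonneg (div_nonneg (by nlinarith [sq_nonneg (p-1)]) hc.le) (by linarith))
        (div_nonneg (by
          nlinarith [mul_nonneg (mul_nonneg (sub_nonneg.2 hp1.le) (sub_nonneg.2 hp1.le))
            (sub_nonneg.2 hp1.le)]) hc.le)]
    exact congrArg ENNReal.ofReal (by ring)
end

section
/- With F_β(x) = 3x² − 2x³ and p ∈ (0,1), the CDF of the product Z (of a Beta(2,2) variable truncated to [p,1] and an independent uniform on [0,1/2]) is G(z) = 6z(p² − 2p + 1)/(1 − F_β(p)) for 0 ≤ z ≤ p/2, and G(z) = (2z(4z² − 6z + 3) + p²(2p − 3))/(1 − F_β(p)) for p/2 ≤ z ≤ 1/2; in particular G(1/2) = 1. -/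
open Set MeasureTheory

/-- CDF of the product of a Beta(2,2) variable truncated to `[p,1]` and an
independent `Uniform[0,1/2]` variable: `G(z) = 6z(p²−2p+1)/(1−F_β(p))` for
`0 ≤ z ≤ p/2`, `G(z) = (2z(4z²−6z+3) + p²(2p−3))/(1−F_β(p))` for
`p/2 ≤ z ≤ 1/2`, and `G(1/2) = 1`. -/
theorem stmt_11 (p : ℝ) (hp : p ∈ Ioo (0:ℝ) 1) (Fβ : ℝ) (hFβ : Fβ = 3*p^2 - 2*p^3)
    (μ ν : Measure ℝ)
    (hμ : μ = volume.withDensity (fun x => ENNReal.ofReal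
      (Set.indicator (Icc p 1) (fun x => 6*x*(1-x)/(1 - Fβ)) x)))
    (hν : ν = ENNReal.ofReal 2 • volume.restrict (Icc 0 (1/2)))
    (π : Measure ℝ)
    (hπ : π = Measure.map (fun q : ℝ × ℝ => q.1 * q.2) (μ.prod ν)) :
    (∀ z ∈ Icc (0:ℝ) (p/2),
      π (Iic z) = ENNReal.ofReal (6*z*(p^2 - 2*p + 1)/(1 - Fβ))) ∧
    (∀ z ∈ Icc (p/2) (1/2:ℝ),
      π (Iic z) = ENNReal.ofReal ((2*z*(4*z^2 - 6*z + 3) + p^2*(2*p - 3))/(1 - Fβ))) ∧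
    π (Iic (1/2)) = 1 := by
  have h1F : (0:ℝ) < 1 - Fβ := by
    rw [hFβ]
    have h1 : (0:ℝ) < (1-p)^2*(1+2*p) :=
      mul_pos (pow_pos (sub_pos.mpr hp.2) 2) (by linarith [hp.1])
    nlinarith [h1]
  subst hμ hν hπ
  -- Main reduction: the CDF as an explicit Lebesgue integral over `Icc p 1`.
  have main : ∀ z : ℝ, 0 ≤ z →
      Measure.map (fun q : ℝ × ℝ => q.1 * q.2)
        ((volume.withDensity (fun x => ENNReal.ofReal
          (Set.indicator (Icc p 1) (fun x => 6*x*(1-x)/(1 - Fβ)) x))).prod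
          (ENNReal.ofReal 2 • volume.restrict (Icc 0 (1/2)))) (Iic z)
      = ∫⁻ x in Icc p 1,
          ENNReal.ofReal (6*x*(1-x)/(1 - Fβ) * (2 * min (z/x) (1/2))) := by
    intro z hz
    have hmul : Measurable fun q : ℝ × ℝ => q.1 * q.2 := measurable_fst.mul measurable_snd
    rw [Measure.map_apply hmul measurableSet_Iic]
    have hS : MeasurableSet ((fun q : ℝ × ℝ => q.1 * q.2) ⁻¹' Iic z) := hmul measurableSet_Iic
    rw [Measure.prod_apply hS]
    have hd : Measurable (fun x => ENNReal.ofReal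
        (Set.indicator (Icc p 1) (fun x => 6*x*(1-x)/(1 - Fβ)) x)) := by
      apply Measurable.ennreal_ofReal
      exact Measurable.indicator (by fun_prop) measurableSet_Icc
    rw [lintegral_withDensity_eq_lintegral_mul _ hd (measurable_measure_prodMk_left hS)]
    simp only [Pi.mul_apply]
    have heq : ∀ x : ℝ, ENNReal.ofReal
        (Set.indicator (Icc p 1) (fun x => 6*x*(1-x)/(1 - Fβ)) x) *
        ((ENNReal.ofReal 2 • volume.restrict (Icc 0 (1/2)))
          (Prod.mk x ⁻¹' ((fun q : ℝ × ℝ => q.1 * q.2) ⁻¹' Iic z)))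
        = (Icc p 1).indicator (fun x => ENNReal.ofReal
            (6*x*(1-x)/(1 - Fβ) * (2 * min (z/x) (1/2)))) x := by
      intro x
      by_cases hx : x ∈ Icc p 1
      · rw [indicator_of_mem hx, indicator_of_mem hx]
        have hx0 : 0 < x := lt_of_lt_of_le hp.1 hx.1
        have hpre : Prod.mk x ⁻¹' ((fun q : ℝ × ℝ => q.1 * q.2) ⁻¹' Iic z) = Iic (z/x) := by
          ext y
          simp only [mem_preimage, mem_Iic]
          rw [le_div_iff₀ hx0, mul_comm]
        rw [hpre, Measure.smul_apply, Measure.restrict_apply measurableSet_Iic]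
        have hI : Iic (z/x) ∩ Icc 0 (1/2) = Icc 0 (min (z/x) (1/2)) := by
          ext y
          simp only [mem_inter_iff, mem_Iic, mem_Icc, le_min_iff]
          tauto
        rw [hI, Real.volume_Icc]
        have hmin : 0 ≤ min (z/x) (1/2:ℝ) := le_min (div_nonneg hz hx0.le) (by norm_num)
        rw [smul_eq_mul, ← ENNReal.ofReal_mul (by norm_num),
          ← ENNReal.ofReal_mul (div_nonneg (by nlinarith [hx.1, hx.2]) h1F.le)]
        congr 1
        ring
      · rw [indicator_of_notMem hx, indicator_of_notMem hx]
        simp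
    simp_rw [heq]
    rw [lintegral_indicator measurableSet_Icc]
  -- Case 1 : `0 ≤ z ≤ p/2`.
  have case1 : ∀ z ∈ Icc (0:ℝ) (p/2),
      ∫⁻ x in Icc p 1, ENNReal.ofReal (6*x*(1-x)/(1 - Fβ) * (2 * min (z/x) (1/2)))
      = ENNReal.ofReal (6*z*(p^2 - 2*p + 1)/(1 - Fβ)) := by
    intro z hz
    have hp1 : p ≤ 1 := hp.2.le
    have key : ∀ x ∈ Icc p 1, ENNReal.ofReal (6*x*(1-x)/(1 - Fβ) * (2 * min (z/x) (1/2)))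
        = ENNReal.ofReal (12*z*(1-x)/(1 - Fβ)) := by
      intro x hx
      have hx0 : 0 < x := lt_of_lt_of_le hp.1 hx.1
      have hmin : min (z/x) (1/2:ℝ) = z/x := by
        apply min_eq_left
        rw [div_le_iff₀ hx0]
        calc z ≤ p/2 := hz.2
          _ ≤ 1/2 * x := by linarith [hx.1]
      rw [hmin]
      congr 1
      field_simp
      ring
    rw [setLIntegral_congr_fun_ae measurableSet_Icc (Filter.Eventually.of_forall key)]
    rw [← ofReal_integral_eq_lintegral_ofReal]
    · congr 1
      rw [integral_Icc_eq_integral_Ioc, ← intervalIntegral.integral_of_le hp1]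
      have hder : ∀ x ∈ uIcc p 1, HasDerivAt (fun x => (12*z*x - 6*z*x^2)/(1 - Fβ))
          (12*z*(1-x)/(1 - Fβ)) x := by
        intro x _
        have h1 : HasDerivAt (fun x : ℝ => 12*z*x - 6*z*x^2) (12*z - 6*z*(2*x)) x := by
          simpa using (((hasDerivAt_id x).const_mul (12*z)).fun_sub
            ((hasDerivAt_pow 2 x).const_mul (6*z)))
        have := h1.div_const (1 - Fβ)
        exact this.congr_deriv (by ring)
      rw [intervalIntegral.integral_eq_sub_of_hasDerivAt hder
        (Continuous.intervalIntegrable (by fun_prop) p 1)]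
      ring
    · exact (Continuous.integrableOn_Icc (by fun_prop))
    · filter_upwards [ae_restrict_mem measurableSet_Icc] with x hx
      have hx0 : 0 < x := lt_of_lt_of_le hp.1 hx.1
      have := hz.1
      apply div_nonneg _ h1F.le
      nlinarith [hx.2]
  -- Case 2 : `p/2 ≤ z ≤ 1/2`.
  have case2 : ∀ z ∈ Icc (p/2) (1/2:ℝ),
      ∫⁻ x in Icc p 1, ENNReal.ofReal (6*x*(1-x)/(1 - Fβ) * (2 * min (z/x) (1/2)))
      = ENNReal.ofReal ((2*z*(4*z^2 - 6*z + 3) + p^2*(2*p - 3))/(1 - Fβ)) := by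
    intro z hz
    have hz0 : 0 < z := lt_of_lt_of_le (by linarith [hp.1]) hz.1
    have hpz : p ≤ 2*z := by linarith [hz.1]
    have h2z1 : 2*z ≤ 1 := by linarith [hz.2]
    rw [← setLIntegral_congr Ioc_ae_eq_Icc, ← Ioc_union_Ioc_eq_Ioc hpz h2z1,
      lintegral_union measurableSet_Ioc (Ioc_disjoint_Ioc_of_le le_rfl)]
    have keyA : ∀ x ∈ Ioc p (2*z), ENNReal.ofReal (6*x*(1-x)/(1 - Fβ) * (2 * min (z/x) (1/2)))
        = ENNReal.ofReal (6*x*(1-x)/(1 - Fβ)) := by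
      intro x hx
      have hx0 : 0 < x := lt_trans hp.1 hx.1
      have hmin : min (z/x) (1/2:ℝ) = 1/2 := by
        apply min_eq_right
        rw [le_div_iff₀ hx0]
        linarith [hx.2]
      rw [hmin]; congr 1; ring
    have keyB : ∀ x ∈ Ioc (2*z) 1, ENNReal.ofReal (6*x*(1-x)/(1 - Fβ) * (2 * min (z/x) (1/2)))
        = ENNReal.ofReal (12*z*(1-x)/(1 - Fβ)) := by
      intro x hx
      have hx0 : 0 < x := lt_trans (by linarith) hx.1
      have hmin : min (z/x) (1/2:ℝ) = z/x := by
        apply min_eq_left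
        rw [div_le_iff₀ hx0]
        linarith [hx.1]
      rw [hmin]; congr 1; field_simp; ring
    rw [setLIntegral_congr_fun_ae measurableSet_Ioc (Filter.Eventually.of_forall keyA),
      setLIntegral_congr_fun_ae measurableSet_Ioc (Filter.Eventually.of_forall keyB)]
    have hnnA : ∀ᵐ x ∂(volume.restrict (Ioc p (2*z))), 0 ≤ 6*x*(1-x)/(1 - Fβ) := by
      filter_upwards [ae_restrict_mem measurableSet_Ioc] with x hx
      have hx0 : 0 < x := lt_trans hp.1 hx.1
      have hx1 : x ≤ 1 := le_trans hx.2 h2z1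
      apply div_nonneg _ h1F.le; nlinarith
    have hnnB : ∀ᵐ x ∂(volume.restrict (Ioc (2*z) 1)), 0 ≤ 12*z*(1-x)/(1 - Fβ) := by
      filter_upwards [ae_restrict_mem measurableSet_Ioc] with x hx
      apply div_nonneg _ h1F.le; nlinarith [hx.2]
    rw [← ofReal_integral_eq_lintegral_ofReal (Continuous.integrableOn_Ioc (by fun_prop)) hnnA,
      ← ofReal_integral_eq_lintegral_ofReal (Continuous.integrableOn_Ioc (by fun_prop)) hnnB,
      ← ENNReal.ofReal_add (integral_nonneg_of_ae hnnA) (integral_nonneg_of_ae hnnB)]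
    congr 1
    have hA : ∫ x in Ioc p (2*z), 6*x*(1-x)/(1 - Fβ)
        = ((3*(2*z)^2 - 2*(2*z)^3) - (3*p^2 - 2*p^3))/(1 - Fβ) := by
      rw [← intervalIntegral.integral_of_le hpz]
      have hder : ∀ x ∈ uIcc p (2*z), HasDerivAt (fun x => (3*x^2 - 2*x^3)/(1 - Fβ))
          (6*x*(1-x)/(1 - Fβ)) x := by
        intro x _
        have h1 : HasDerivAt (fun x : ℝ => 3*x^2 - 2*x^3) (3*(2*x) - 2*(3*x^2)) x := by
          simpa using (((hasDerivAt_pow 2 x).const_mul 3).fun_sub ((hasDerivAt_pow 3 x).const_mul 2))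
        have := h1.div_const (1 - Fβ)
        exact this.congr_deriv (by ring)
      rw [intervalIntegral.integral_eq_sub_of_hasDerivAt hder
        (Continuous.intervalIntegrable (by fun_prop) _ _)]
      ring
    have hB : ∫ x in Ioc (2*z) 1, 12*z*(1-x)/(1 - Fβ)
        = ((12*z*1 - 6*z*1^2) - (12*z*(2*z) - 6*z*(2*z)^2))/(1 - Fβ) := by
      rw [← intervalIntegral.integral_of_le h2z1]
      have hder : ∀ x ∈ uIcc (2*z) 1, HasDerivAt (fun x => (12*z*x - 6*z*x^2)/(1 - Fβ))
          (12*z*(1-x)/(1 - Fβ)) x := by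
        intro x _
        have h1 : HasDerivAt (fun x : ℝ => 12*z*x - 6*z*x^2) (12*z - 6*z*(2*x)) x := by
          simpa using (((hasDerivAt_id x).const_mul (12*z)).fun_sub
            ((hasDerivAt_pow 2 x).const_mul (6*z)))
        have := h1.div_const (1 - Fβ)
        exact this.congr_deriv (by ring)
      rw [intervalIntegral.integral_eq_sub_of_hasDerivAt hder
        (Continuous.intervalIntegrable (by fun_prop) _ _)]
      ring
    rw [hA, hB]
    field_simp
    ring
  refine ⟨fun z hz => ?_, fun z hz => ?_, ?_⟩
  · rw [main z hz.1, case1 z hz]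
  · have hz0 : (0:ℝ) ≤ z := le_trans (by linarith [hp.1]) hz.1
    rw [main z hz0, case2 z hz]
  · have hmem : (1/2:ℝ) ∈ Icc (p/2) (1/2:ℝ) := ⟨by linarith [hp.2], le_refl _⟩
    rw [main (1/2) (by norm_num), case2 (1/2) hmem]
    have hval : (2*(1/2:ℝ)*(4*(1/2:ℝ)^2 - 6*(1/2:ℝ) + 3) + p^2*(2*p - 3))/(1 - Fβ) = 1 := by
      rw [div_eq_one_iff_eq (ne_of_gt h1F), hFβ]
      ring
    rw [hval, ENNReal.ofReal_one]
end
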